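/- Define words w_n over the alphabet {1, …, n} recursively by w₁ = (1) and w_n = w_{n−1} · (n) · ∏_{j=1}^{n−1} ((n)(n−j)). For n ≥ 2, the set of cyclically adjacent ordered pairs of letters in w_n (i.e., pairs (w_n[i], w_n[i+1 mod |w_n|])) equals the full set {(i, j) : 1 ≤ i, j ≤ n}, and moreover each ordered pair occurs exactly once among the |w_n| cyclic positions. -/

import Mathlib

/-- The word `w n` over the alphabet `{1, …, n}`. -/
def specialWord : ℕ → List ℕ
  | 0 => []
  | 1 => [1]
  | (n + 1) =>
      specialWord n ++ [n + 1] ++ (List.range n).flatMap (fun j => [n + 1, n - j])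

/-- The cyclically adjacent ordered pair of letters of `u` at position `i`. -/
def cyclicPair (u : List ℕ) (i : ℕ) : ℕ × ℕ :=
  (u.getD i 0, u.getD ((i + 1) % u.length) 0)

/-!
The word `w (n + 1)` is `w n` followed by the block `B n = (n+1) (n+1) n (n+1) (n-1) … (n+1) 1`.
Both `w n` and `B n` end in `1`, so the cyclic pairs of their concatenation are those of `w n`
together with those of `B n`: the two wrap-around pairs `(1, _)` are merely exchanged. The block
`B n` contributes the pairs `(n+1, n+1)`, `(n+1, k)` and `(k, n+1)` for `1 ≤ k ≤ n`, so by
induction every pair in `[1, n]²` occurs cyclically in `w n`. Since `|w n| = n²`, each occurs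
exactly once.
-/

namespace List

variable {α : Type*}

def cyclicPairs (u : List α) : List (α × α) := u.zip (u.rotate 1)

@[simp]
theorem length_cyclicPairs (u : List α) : u.cyclicPairs.length = u.length := by
  simp [cyclicPairs]

theorem cyclicPairs_cons (x : α) (u : List α) :
    (x :: u).cyclicPairs = (x :: u).zip (u ++ [x]) := by
  simp [cyclicPairs]

theorem cyclicPairs_rotate (u : List α) (k : ℕ) :
    (u.rotate k).cyclicPairs = u.cyclicPairs.rotate k := by
  rw [cyclicPairs, cyclicPairs, zip, zipWith_rotate_distrib _ _ _ _ (length_rotate u 1).symm,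
    rotate_rotate, rotate_rotate, Nat.add_comm]

theorem cyclicPairs_rotate_perm (u : List α) (k : ℕ) :
    (u.rotate k).cyclicPairs ~ u.cyclicPairs := by
  rw [cyclicPairs_rotate]
  exact rotate_perm _ _

theorem cyclicPairs_cons_append_cons (x : α) (s t : List α) :
    (x :: s ++ x :: t).cyclicPairs = (x :: s).cyclicPairs ++ (x :: t).cyclicPairs := by
  rw [cons_append, cyclicPairs_cons, cyclicPairs_cons, cyclicPairs_cons, ← cons_append,
    show s ++ x :: t ++ [x] = (s ++ [x]) ++ (t ++ [x]) by simp, zip_append (by simp)]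

theorem cyclicPairs_concat_append_concat_perm (s t : List α) (z : α) :
    (s ++ [z] ++ (t ++ [z])).cyclicPairs ~ (s ++ [z]).cyclicPairs ++ (t ++ [z]).cyclicPairs := by
  -- Rotating the common last letter `z` to the front reduces to `cyclicPairs_cons_append_cons`.
  have hrot (l : List α) : (z :: l).rotate 1 = l ++ [z] := by simp
  calc (s ++ [z] ++ (t ++ [z])).cyclicPairs
      = ((z :: s ++ z :: t).rotate 1).cyclicPairs := by rw [cons_append, hrot]; simp
    _ ~ (z :: s ++ z :: t).cyclicPairs := cyclicPairs_rotate_perm _ _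
    _ = (z :: s).cyclicPairs ++ (z :: t).cyclicPairs := cyclicPairs_cons_append_cons z s t
    _ ~ ((z :: s).rotate 1).cyclicPairs ++ ((z :: t).rotate 1).cyclicPairs :=
        ((cyclicPairs_rotate_perm _ _).append (cyclicPairs_rotate_perm _ _)).symm
    _ = (s ++ [z]).cyclicPairs ++ (t ++ [z]).cyclicPairs := by rw [hrot, hrot]

theorem cyclicPairs_cons_append_flatMap {β : Type*} (x : α) (s : List α) (l : List β)
    (f : β → List α) :
    (x :: s ++ l.flatMap fun b => x :: f b).cyclicPairs =
      (x :: s).cyclicPairs ++ l.flatMap fun b => (x :: f b).cyclicPairs := by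
  induction l generalizing s with
  | nil => simp
  | cons b l ih =>
    rw [flatMap_cons, flatMap_cons, cons_append (a := x) (as := f b), cyclicPairs_cons_append_cons,
      ← cons_append, ih]

theorem nodup_and_toFinset_eq_of_subset_of_length_le [DecidableEq α] {l : List α}
    {s : Finset α} (hs : s ⊆ l.toFinset) (hl : l.length ≤ s.card) :
    l.Nodup ∧ l.toFinset = s := by
  have hcard : l.toFinset.card = l.length :=
    le_antisymm (toFinset_card_le l) (hl.trans (Finset.card_le_card hs))
  exact ⟨Multiset.toFinset_card_eq_card_iff_nodup.mp hcard,
    (Finset.eq_of_subset_of_card_le hs (hcard.trans_le hl)).symm⟩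

end List

open List

theorem cyclicPair_eq_getElem (u : List ℕ) (i : ℕ) (hi : i < u.length) :
    cyclicPair u i = u.cyclicPairs[i]'(by simpa using hi) := by
  simp [cyclicPair, cyclicPairs, hi, Nat.mod_lt _ (i.zero_le.trans_lt hi)]

def specialWordBlock (n : ℕ) : List ℕ :=
  (n + 1) :: (List.range n).flatMap fun j => [n + 1, n - j]

theorem specialWord_succ (n : ℕ) : specialWord (n + 1) = specialWord n ++ specialWordBlock n := by
  cases n <;> simp [specialWord, specialWordBlock]

theorem length_specialWordBlock (n : ℕ) : (specialWordBlock n).length = 2 * n + 1 := by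
  simp [specialWordBlock, Nat.mul_comm]

theorem length_specialWord (n : ℕ) : (specialWord n).length = n ^ 2 := by
  induction n with
  | zero => rfl
  | succ n ih => rw [specialWord_succ, length_append, ih, length_specialWordBlock]; ring

theorem getLast?_specialWordBlock (n : ℕ) : (specialWordBlock n).getLast? = some 1 := by
  cases n <;> simp [specialWordBlock, List.range_succ, List.getLast?_cons]

theorem getLast?_specialWord {n : ℕ} (hn : n ≠ 0) : (specialWord n).getLast? = some 1 := by
  obtain ⟨m, rfl⟩ := Nat.exists_eq_succ_of_ne_zero hn
  rw [specialWord_succ, getLast?_append, getLast?_specialWordBlock]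
  rfl

theorem cyclicPairs_specialWordBlock (n : ℕ) :
    (specialWordBlock n).cyclicPairs =
      (n + 1, n + 1) :: (List.range n).flatMap fun j => [(n + 1, n - j), (n - j, n + 1)] := by
  have := cyclicPairs_cons_append_flatMap (n + 1) [] (List.range n) fun j => [n - j]
  simpa [specialWordBlock, cyclicPairs] using this

theorem cyclicPairs_specialWord_succ_perm {n : ℕ} (hn : n ≠ 0) :
    (specialWord (n + 1)).cyclicPairs ~
      (specialWord n).cyclicPairs ++ (specialWordBlock n).cyclicPairs := by
  obtain ⟨s, hs⟩ := getLast?_eq_some_iff.mp (getLast?_specialWord hn)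
  obtain ⟨t, ht⟩ := getLast?_eq_some_iff.mp (getLast?_specialWordBlock n)
  rw [specialWord_succ, hs, ht]
  exact cyclicPairs_concat_append_concat_perm s t 1

theorem mem_cyclicPairs_specialWord {n a b : ℕ} (ha : a ∈ Finset.Icc 1 n)
    (hb : b ∈ Finset.Icc 1 n) : (a, b) ∈ (specialWord n).cyclicPairs := by
  induction n with
  | zero => simp at ha
  | succ n ih =>
    simp only [Finset.mem_Icc] at ha hb ih
    rcases Nat.eq_zero_or_pos n with rfl | hn
    · obtain ⟨rfl, rfl⟩ : a = 1 ∧ b = 1 := by omega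
      simp [specialWord, cyclicPairs]
    rw [(cyclicPairs_specialWord_succ_perm hn.ne').mem_iff, mem_append,
      cyclicPairs_specialWordBlock]
    by_cases hab : a ≤ n ∧ b ≤ n
    · exact .inl (ih ⟨ha.1, hab.1⟩ ⟨hb.1, hab.2⟩)
    right
    simp only [mem_cons, mem_flatMap, mem_range, Prod.mk.injEq]
    rcases (by omega : a = n + 1 ∧ b = n + 1 ∨ a = n + 1 ∧ b ≤ n ∨ a ≤ n ∧ b = n + 1) with
      h | h | h
    · exact .inl h
    · exact .inr ⟨n - b, by omega, .inl (by omega)⟩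
    · exact .inr ⟨n - a, by omega, .inr (by omega)⟩

theorem nodup_cyclicPairs_specialWord_and_toFinset_eq (n : ℕ) :
    (specialWord n).cyclicPairs.Nodup ∧
      (specialWord n).cyclicPairs.toFinset = Finset.Icc 1 n ×ˢ Finset.Icc 1 n := by
  refine nodup_and_toFinset_eq_of_subset_of_length_le ?_ ?_
  · rintro ⟨a, b⟩ hab
    rw [Finset.mem_product] at hab
    exact mem_toFinset.mpr (mem_cyclicPairs_specialWord hab.1 hab.2)
  · simp [length_specialWord, sq]

theorem stmt_8_general (n : ℕ) :
    Function.Injective (fun i : Fin (specialWord n).length =>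
      cyclicPair (specialWord n) i) ∧
    Set.range (fun i : Fin (specialWord n).length => cyclicPair (specialWord n) i) =
      {p : ℕ × ℕ | 1 ≤ p.1 ∧ p.1 ≤ n ∧ 1 ≤ p.2 ∧ p.2 ≤ n} := by
  obtain ⟨hnodup, htoFinset⟩ := nodup_cyclicPairs_specialWord_and_toFinset_eq n
  have hget : (fun i : Fin (specialWord n).length => cyclicPair (specialWord n) i) =
      (specialWord n).cyclicPairs.get ∘ finCongr (length_cyclicPairs _).symm :=
    funext fun i => cyclicPair_eq_getElem _ i i.isLt
  rw [hget]
  refine ⟨(nodup_iff_injective_get.mp hnodup).comp (finCongr _).injective, ?_⟩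
  rw [(finCongr _).surjective.range_comp, Set.range_list_get]
  ext p
  simp [← mem_toFinset, htoFinset, and_assoc]

theorem stmt_8 (n : ℕ) (hn : 2 ≤ n) :
    Function.Injective (fun i : Fin (specialWord n).length =>
      cyclicPair (specialWord n) i) ∧
    Set.range (fun i : Fin (specialWord n).length => cyclicPair (specialWord n) i) =
      {p : ℕ × ℕ | 1 ≤ p.1 ∧ p.1 ≤ n ∧ 1 ≤ p.2 ∧ p.2 ≤ n} :=
  stmt_8_general n
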